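/- Let G = ⟨s₁,…,s_r⟩ be the free group of rank r and G ↷ᵀ (X,B,μ) a G-system. Let α, β be finite-entropy partitions and suppose there exist n, m ∈ ℕ such that β^n refines α and α^m refines β^n. Then α^m is a splitting of β. -/

import Mathlib

open MeasureTheory Filter
open scoped ENNReal symmDiff

namespace Bowen

noncomputable section

/-- The free group of rank `r`. -/
abbrev FG (r : ℕ) := FreeGroup (Fin r)

/-- The generating set element corresponding to `(i, b)`: `sᵢ` if `b = true`,
`sᵢ⁻¹` if `b = false`. -/
def gen {r : ℕ} (s : Fin r × Bool) : FG r :=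
  cond s.2 (FreeGroup.of s.1) (FreeGroup.of s.1)⁻¹

/-- The symmetric generating set `S = {s₁^{±1},…,s_r^{±1}}`. -/
def Sset (r : ℕ) : Set (FG r) := Set.range (gen (r := r))

/-- The ball of radius `n` about the identity in the word metric of `(G,S)`. -/
def ball (r n : ℕ) : Set (FG r) := {g | FreeGroup.norm g ≤ n}

section Partitions

variable {X : Type*} [mX : MeasurableSpace X] {K L : Type*}

/-- Shannon entropy of the countable labeled partition `p` with respect to `μ`
(in `ℝ≥0∞`, so that `H(p) < ∞` is meaningful). -/
def Hpart (μ : Measure X) (p : X → K) : ℝ≥0∞ :=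
  ∑' k : K, ENNReal.ofReal (Real.negMulLog ((μ (p ⁻¹' {k})).toReal))

/-- The atom of the partition `p` containing `x`. -/
def atomOf (p : X → K) (x : X) : Set X := p ⁻¹' {p x}

/-- Conditional Shannon entropy of `p` given the sub-σ-algebra `m`:
`H(p|m) = ∫ -log( μ(A_x | m)(x) ) dμ(x)`. -/
def HpartC (μ : Measure X) (p : X → K) (m : MeasurableSpace X) : ℝ≥0∞ :=
  ∫⁻ x, ENNReal.ofReal
    (- Real.log ((μ[(atomOf p x).indicator (fun _ => (1:ℝ)) | m]) x)) ∂μ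

/-- Join of two labeled partitions. -/
def pjoin (p : X → K) (q : X → L) : X → K × L := fun x => (p x, q x)

/-- Pullback partition `T_g^{-1} p`. -/
def pull {r : ℕ} (T : FG r → X → X) (g : FG r) (p : X → K) : X → K :=
  fun x => p (T g x)

/-- The join `⋁_{q ∈ Q} T_q^{-1} p` over a set `Q ⊆ G`. -/
def powS {r : ℕ} (T : FG r → X → X) (p : X → K) (Q : Set (FG r)) : X → (Q → K) :=
  fun x q => p (T (q : FG r) x)

/-- The join `p^n = ⋁_{g ∈ B(e,n)} T_g^{-1} p`. -/
def pow {r : ℕ} (T : FG r → X → X) (p : X → K) (n : ℕ) : X → (ball r n → K) :=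
  powS T p (ball r n)

/-- The σ-algebra generated by the partition `p`. -/
def sAlg (p : X → K) : MeasurableSpace X := MeasurableSpace.comap p ⊤

/-- The smallest `G`-invariant σ-algebra containing the partition `p`. -/
def sAlgG {r : ℕ} (T : FG r → X → X) (p : X → K) : MeasurableSpace X :=
  ⨆ g : FG r, sAlg (pull T g p)

/-- The σ-algebra `⋁_{f ∈ Q} T_f^{-1} p` for a (possibly infinite) `Q ⊆ G`. -/
def sAlgSet {r : ℕ} (T : FG r → X → X) (p : X → K) (Q : Set (FG r)) :
    MeasurableSpace X :=
  ⨆ f ∈ Q, sAlg (pull T f p)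

/-- `F(T,α) = (1−2r)H(α) + ∑ᵢ H(α ∨ T_{sᵢ}^{-1}α)`. -/
def FF {r : ℕ} (T : FG r → X → X) (μ : Measure X) (p : X → K) : ℝ :=
  (1 - 2 * (r : ℝ)) * (Hpart μ p).toReal
    + ∑ i : Fin r, (Hpart μ (pjoin p (pull T (FreeGroup.of i) p))).toReal

/-- `f(T,α) = inf_{n>0} F(T,α^n)`, as an extended real. -/
def littleF {r : ℕ} (T : FG r → X → X) (μ : Measure X) (p : X → K) : EReal :=
  ⨅ n : ℕ, ((FF T μ (pow T p (n + 1)) : ℝ) : EReal)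

/-- Conditional version `F(T,α|𝓕) = (1−2r)H(α|𝓕) + ∑ᵢ H(α ∨ T_{sᵢ}^{-1}α|𝓕)`. -/
def FFc {r : ℕ} (T : FG r → X → X) (μ : Measure X) (m : MeasurableSpace X)
    (p : X → K) : ℝ :=
  (1 - 2 * (r : ℝ)) * (HpartC (mX := mX) μ p m).toReal
    + ∑ i : Fin r, (HpartC (mX := mX) μ (pjoin p (pull T (FreeGroup.of i) p)) m).toReal

/-- Conditional `f(T,α|𝓕) = inf_{n>0} F(T,α^n|𝓕)`. -/
def littleFc {r : ℕ} (T : FG r → X → X) (μ : Measure X) (m : MeasurableSpace X)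
    (p : X → K) : EReal :=
  ⨅ n : ℕ, ((FFc (mX := mX) T μ m (pow T p (n + 1)) : ℝ) : EReal)

/-- The mean entropy `h(T_s, α) = lim_n H(⋁_{i=0}^n T_s^{-i}α)/(n+1)`; since the
sequence is subadditive the limit equals the infimum, which we take as the
definition. -/
def hrate {r : ℕ} (T : FG r → X → X) (μ : Measure X) (s : FG r) (p : X → K) : ℝ :=
  ⨅ n : ℕ, (Hpart μ (fun x (i : Fin (n + 1)) => p (T (s ^ (i : ℕ)) x))).toReal / (n + 1)

/-- Conditional mean entropy `h(T_s, α|𝓕) = lim_n H(⋁_{i=0}^n T_s^{-i}α | 𝓕)/(n+1)`;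
for an invariant `𝓕` the sequence is subadditive so the limit equals the infimum. -/
def hrateC {r : ℕ} (T : FG r → X → X) (μ : Measure X) (m : MeasurableSpace X)
    (s : FG r) (p : X → K) : ℝ :=
  ⨅ n : ℕ, (HpartC (mX := mX) μ (fun x (i : Fin (n + 1)) => p (T (s ^ (i : ℕ)) x)) m).toReal / (n + 1)

/-- `F_*(T,α) = (1−r)H(α) + ∑ᵢ h(T_{sᵢ},α)`. -/
def Fstar {r : ℕ} (T : FG r → X → X) (μ : Measure X) (p : X → K) : ℝ :=
  (1 - (r : ℝ)) * (Hpart μ p).toReal + ∑ i : Fin r, hrate T μ (FreeGroup.of i) p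

/-- `f_*(T,α) = inf_{n>0} F_*(T,α^n)`. -/
def fstar {r : ℕ} (T : FG r → X → X) (μ : Measure X) (p : X → K) : EReal :=
  ⨅ n : ℕ, ((Fstar T μ (pow T p (n + 1)) : ℝ) : EReal)

/-- `F_*(T,α|𝓕) = (1−r)H(α|𝓕) + ∑ᵢ h(T_{sᵢ},α|𝓕)`. -/
def FstarC {r : ℕ} (T : FG r → X → X) (μ : Measure X) (m : MeasurableSpace X)
    (p : X → K) : ℝ :=
  (1 - (r : ℝ)) * (HpartC (mX := mX) μ p m).toReal + ∑ i : Fin r, hrateC (mX := mX) T μ m (FreeGroup.of i) p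

/-- `f_*(T,α|𝓕) = inf_{n>0} F_*(T,α^n|𝓕)`. -/
def fstarC {r : ℕ} (T : FG r → X → X) (μ : Measure X) (m : MeasurableSpace X)
    (p : X → K) : EReal :=
  ⨅ n : ℕ, ((FstarC (mX := mX) T μ m (pow T p (n + 1)) : ℝ) : EReal)

/-- `p` refines `q`: each atom of `p` is contained, up to a `μ`-null set,
in an atom of `q`. -/
def Refines (μ : Measure X) (p : X → K) (q : X → L) : Prop :=
  ∀ k : K, ∃ l : L, μ (p ⁻¹' {k} \ q ⁻¹' {l}) = 0

/-- Two labeled partitions are equal as partitions (up to null sets). -/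
def PartEquiv (μ : Measure X) (p : X → K) (q : X → L) : Prop :=
  Refines μ p q ∧ Refines μ q p

/-- `σ` is a simple splitting of `p`: `σ = p ∨ T_s^{-1}β` for some `s ∈ S` and
some coarsening `β` of `p`. -/
def SimpleSplit {r : ℕ} (μ : Measure X) (T : FG r → X → X) (p σ : X → ℕ) : Prop :=
  ∃ s ∈ Sset r, ∃ β : X → ℕ, Measurable β ∧ Refines μ p β ∧
    PartEquiv μ σ (pjoin p (pull T s β))

/-- `τ` is a splitting of `p`: obtained from `p` by a finite sequence of simple
splittings (as a partition, i.e. up to relabeling and null sets). -/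
def IsSplitting {r : ℕ} (μ : Measure X) (T : FG r → X → X) (p : X → ℕ)
    (τ : X → K) : Prop :=
  ∃ σ : X → ℕ, Relation.ReflTransGen (SimpleSplit μ T) p σ ∧ PartEquiv μ σ τ

/-- A partition is generating if the smallest `G`-invariant σ-algebra containing it
is the full σ-algebra up to `μ`-null sets. -/
def Generating {r : ℕ} (T : FG r → X → X) (μ : Measure X) (p : X → K) : Prop :=
  ∀ A : Set X, MeasurableSet A →
    ∃ A' : Set X, MeasurableSet[sAlgG T p] A' ∧ μ (A ∆ A') = 0

/-- The Rohlin distance `d(α,β) = H(α|β) + H(β|α)`. -/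
def rohlinDist (μ : Measure X) (p : X → K) (q : X → L) : ℝ :=
  (HpartC μ p (sAlg q)).toReal + (HpartC μ q (sAlg p)).toReal

end Partitions

/-- Adjacency in the left Cayley graph `Γ_L`: an edge joins `a` and `sa`, `s ∈ S`. -/
def adjL {r : ℕ} (a b : FG r) : Prop := ∃ s ∈ Sset r, b = s * a

/-- `Past(g₁;g₂)`: the set of `f ∈ G` such that every path in the left Cayley
graph from `f` to `g₁` passes through `g₂`. -/
def Past {r : ℕ} (g₁ g₂ : FG r) : Set (FG r) :=
  {f | ∀ l : List (FG r), l ≠ [] → l.head? = some f → l.getLast? = some g₁ →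
        l.Chain' adjL → g₂ ∈ l}

/-- A subset `F ⊆ G` is right-connected: the subgraph of the right Cayley graph
induced on `F` is connected. -/
def RightConnected {r : ℕ} (F : Set (FG r)) : Prop :=
  ∀ g ∈ F, ∀ h ∈ F,
    Relation.ReflTransGen (fun a b => a ∈ F ∧ b ∈ F ∧ ∃ s ∈ Sset r, b = a * s) g h

/-- A subset `F ⊆ G` is left-connected: the subgraph of the left Cayley graph
induced on `F` is connected. -/
def LeftConnected {r : ℕ} (F : Set (FG r)) : Prop :=
  ∀ g ∈ F, ∀ h ∈ F,
    Relation.ReflTransGen (fun a b => a ∈ F ∧ b ∈ F ∧ ∃ s ∈ Sset r, b = s * a) g h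

section Markov

variable {X : Type*} [MeasurableSpace X] {K : Type*}

/-- A `G`-process `(T,X,μ,α)` is Markov: for every `s ∈ S`, `g ∈ G` and every atom
`A` of `α`, `μ(T_{sg}^{-1}A | ⋁_{f∈Past(sg;g)} T_f^{-1}α) = μ(T_{sg}^{-1}A | T_g^{-1}α)`
almost everywhere. -/
def IsMarkov {r : ℕ} (μ : Measure X) (T : FG r → X → X) (p : X → K) : Prop :=
  ∀ s ∈ Sset r, ∀ g : FG r, ∀ k : K,
    (μ[((pull T (s * g) p) ⁻¹' {k}).indicator (fun _ => (1:ℝ)) |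
        sAlgSet T p (Past (s * g) g)])
      =ᵐ[μ]
    (μ[((pull T (s * g) p) ⁻¹' {k}).indicator (fun _ => (1:ℝ)) |
        sAlg (pull T g p)])

end Markov


section ExtraDefs

/-- The distance `d₁` between two ordered processes:
`∑_{s∈S} ∑_{i,j} |μ(A_i ∩ T_s^{-1}A_j) − ν(B_i ∩ U_s^{-1}B_j)|`. -/
def d1 {X Y : Type*} [MeasurableSpace X] [MeasurableSpace Y] {r : ℕ}
    (T : FG r → X → X) (μ : Measure X) (α : X → ℕ)
    (U : FG r → Y → Y) (ν : Measure Y) (β : Y → ℕ) : ℝ :=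
  ∑ i : Fin r, ∑ b : Bool,
    ∑' ij : ℕ × ℕ,
      |(μ (α ⁻¹' {ij.1} ∩ pull T (gen (i, b)) α ⁻¹' {ij.2})).toReal -
        (ν (β ⁻¹' {ij.1} ∩ pull U (gen (i, b)) β ⁻¹' {ij.2})).toReal|

/-- Isomorphism of ordered processes: a measure conjugacy between conull sets
intertwining the actions and carrying the `i`-th atom to the `i`-th atom. -/
def OrderedIso {X Y : Type*} [MeasurableSpace X] [MeasurableSpace Y] {r : ℕ}
    (T : FG r → X → X) (μ : Measure X) (α : X → ℕ)
    (U : FG r → Y → Y) (ν : Measure Y) (β : Y → ℕ) : Prop :=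
  ∃ (X' : Set X) (Y' : Set Y) (φ : X → Y) (ψ : Y → X),
    MeasurableSet X' ∧ MeasurableSet Y' ∧ μ X'ᶜ = 0 ∧ ν Y'ᶜ = 0 ∧
    Measurable φ ∧ Measurable ψ ∧ Set.MapsTo φ X' Y' ∧ Set.MapsTo ψ Y' X' ∧
    (∀ x ∈ X', ψ (φ x) = x) ∧ (∀ y ∈ Y', φ (ψ y) = y) ∧
    Measure.map φ μ = ν ∧
    (∀ (g : FG r), ∀ x ∈ X', φ (T g x) = U g (φ x)) ∧
    (∀ x ∈ X', β (φ x) = α x)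

/-- A transition system for `(G,S)`: a family of `K × K` matrices indexed by the
generating set together with a row vector, written as functions. -/
structure TransSys (r : ℕ) (K : Type*) where
  P : Fin r × Bool → K → K → ℝ
  pi : K → ℝ

/-- The transition system is an invariant transition system: the `P^s` are
stochastic matrices, `π` is a probability vector which is a steady state vector
for every `P^s`, and `π_i P^{s^{-1}}_{ij} = π_j P^s_{ji}`. -/
def TransSys.IsInvariant {r : ℕ} {K : Type*} (ts : TransSys r K) : Prop :=
  (∀ s i j, 0 ≤ ts.P s i j) ∧ (∀ s i, HasSum (ts.P s i) 1) ∧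
    (∀ i, 0 ≤ ts.pi i) ∧ HasSum ts.pi 1 ∧
    (∀ s j, HasSum (fun i => ts.pi i * ts.P s i j) (ts.pi j)) ∧
    (∀ s i j, ts.pi i * ts.P (s.1, !s.2) i j = ts.pi j * ts.P s j i)

/-- The canonical (shift) action of `G` on `K^G`: `(T_g x)(f) = x(fg)`. -/
def shiftT {r : ℕ} {K : Type*} : FG r → (FG r → K) → (FG r → K) :=
  fun g x f => x (f * g)

/-- `μ` is (a measure) induced by the transition system `ts`: the time-`e`
distribution is `π` and the transition probabilities into the complement of the
past are given by the matrices `P^s`.  (Note `T_g^{-1}A_k = {x : x(g) = k}`;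
the conditional equalities `μ(A|B) = c` are recorded in the equivalent product
form `μ(A ∩ B) = c·μ(B)`.) -/
def IsInducedBy {r : ℕ} {K : Type*} [MeasurableSpace K]
    (μ : Measure (FG r → K)) (ts : TransSys r K) : Prop :=
  (∀ k : K, μ {x | x 1 = k} = ENNReal.ofReal (ts.pi k)) ∧
  ∀ (s : Fin r × Bool) (g : FG r),
    FreeGroup.norm (gen s * g) = FreeGroup.norm g + 1 →
    ∀ (n : ℕ) (fs : Fin n → FG r) (ks : Fin n → K) (k₀ k : K),
      (∀ i, fs i ∈ Past (gen s * g) g ∧ fs i ≠ g) →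
      (μ ({x | x (gen s * g) = k} ∩ ({x | x g = k₀} ∩ ⋂ i, {x | x (fs i) = ks i}))
          = ENNReal.ofReal (ts.P s k₀ k) * μ ({x | x g = k₀} ∩ ⋂ i, {x | x (fs i) = ks i})) ∧
      μ ({x | x (gen s * g) = k} ∩ {x | x g = k₀})
          = ENNReal.ofReal (ts.P s k₀ k) * μ {x | x g = k₀}

end ExtraDefs

/-! Every `g` with `|g| = k + 1` is `h s` with `|h| = k` and `s ∈ S`, and
`T_{hs}⁻¹γ = T_s⁻¹(T_h⁻¹γ)` where `T_h⁻¹γ` is coarser than `γ^k`. Hence `τ ∨ γ^{k+1}` is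
obtained from `τ ∨ γ^k` by simple splittings, one translate at a time, and `τ ∨ γ^k` is a
splitting of `τ` whenever `τ` refines `γ`. Applied to `τ = β, γ = β` this makes `β^n` a splitting
of `β`; since `β^n` refines `α`, applied to `τ = β^n, γ = α` it makes `β^n ∨ α^m` one, and this
join is `α^m` because `α^m` refines `β^n`. All of this is up to equivalence of partitions,
which simple splittings respect. -/

section Refinement

variable {X : Type*} [MeasurableSpace X] {μ : Measure X} {K L M : Type*}
  {p : X → K} {q : X → L} {t : X → M}

theorem Refines.of_forall (h : ∀ k, ∃ l, ∀ x, p x = k → q x = l) : Refines μ p q :=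
  fun k => (h k).imp fun _ hl =>
    measure_mono_null (fun x hx => (hx.2 (hl x hx.1)).elim) measure_empty

theorem Refines.refl (p : X → K) : Refines μ p p :=
  .of_forall fun k => ⟨k, fun _ => id⟩

theorem Refines.trans (hpq : Refines μ p q) (hqt : Refines μ q t) : Refines μ p t := by
  intro k
  obtain ⟨l, hl⟩ := hpq k
  obtain ⟨j, hj⟩ := hqt l
  refine ⟨j, measure_mono_null (fun x ⟨hxk, hxj⟩ => ?_) (measure_union_null hl hj)⟩
  by_cases hxl : x ∈ q ⁻¹' {l}
  exacts [Or.inr ⟨hxl, hxj⟩, Or.inl ⟨hxk, hxl⟩]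

theorem refines_of_forall_eq [Nonempty L] (h : ∀ x y, p x = p y → q x = q y) :
    Refines μ p q := by
  refine .of_forall fun k => ?_
  by_cases hk : ∃ y, p y = k
  · obtain ⟨y, rfl⟩ := hk
    exact ⟨q y, fun x hx => h x y hx⟩
  · exact ⟨Classical.arbitrary L, fun x hx => (hk ⟨x, hx⟩).elim⟩

theorem partEquiv_of_forall_eq_iff [Nonempty K] [Nonempty L]
    (h : ∀ x y, p x = p y ↔ q x = q y) : PartEquiv μ p q :=
  ⟨refines_of_forall_eq fun x y => (h x y).1, refines_of_forall_eq fun x y => (h x y).2⟩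

theorem PartEquiv.refl (p : X → K) : PartEquiv μ p p :=
  ⟨.refl p, .refl p⟩

theorem PartEquiv.symm (h : PartEquiv μ p q) : PartEquiv μ q p :=
  ⟨h.2, h.1⟩

theorem PartEquiv.trans (hpq : PartEquiv μ p q) (hqt : PartEquiv μ q t) : PartEquiv μ p t :=
  ⟨hpq.1.trans hqt.1, hqt.2.trans hpq.2⟩

theorem refines_pjoin_left (p : X → K) (q : X → L) : Refines μ (pjoin p q) p :=
  .of_forall fun k => ⟨k.1, fun _ hx => by rw [← hx]; rfl⟩

theorem refines_pjoin_right (p : X → K) (q : X → L) : Refines μ (pjoin p q) q :=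
  .of_forall fun k => ⟨k.2, fun _ hx => by rw [← hx]; rfl⟩

theorem Refines.pjoin_left (t : X → M) (hpq : Refines μ p q) :
    Refines μ (pjoin p t) (pjoin q t) := by
  rintro ⟨k, j⟩
  obtain ⟨l, hl⟩ := hpq k
  refine ⟨(l, j), measure_mono_null (fun x hx => ?_) hl⟩
  simp only [Set.mem_sdiff, Set.mem_preimage, Set.mem_singleton_iff, pjoin, Prod.mk.injEq] at hx ⊢
  tauto

theorem PartEquiv.pjoin_left (t : X → M) (hpq : PartEquiv μ p q) :
    PartEquiv μ (pjoin p t) (pjoin q t) :=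
  ⟨hpq.1.pjoin_left t, hpq.2.pjoin_left t⟩

theorem Refines.partEquiv_pjoin (hpq : Refines μ p q) : PartEquiv μ (pjoin p q) p := by
  refine ⟨refines_pjoin_left p q, fun k => ?_⟩
  obtain ⟨l, hl⟩ := hpq k
  refine ⟨(k, l), ?_⟩
  convert hl using 2
  ext x
  simp only [Set.mem_sdiff, Set.mem_preimage, Set.mem_singleton_iff, pjoin, Prod.mk.injEq]
  tauto

theorem Refines.partEquiv_pjoin' (hqp : Refines μ q p) : PartEquiv μ (pjoin p q) q := by
  refine ⟨refines_pjoin_right p q, fun l => ?_⟩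
  obtain ⟨k, hk⟩ := hqp l
  refine ⟨(k, l), ?_⟩
  convert hk using 2
  ext x
  simp only [Set.mem_sdiff, Set.mem_preimage, Set.mem_singleton_iff, pjoin, Prod.mk.injEq]
  tauto

end Refinement

section Ball

variable {r : ℕ}

theorem mem_ball {k : ℕ} {g : FG r} : g ∈ ball r k ↔ FreeGroup.norm g ≤ k := Iff.rfl

theorem ball_finite (r k : ℕ) : (ball r k).Finite :=
  ((List.finite_length_le (Fin r × Bool) k).image FreeGroup.mk).subset fun g hg =>
    ⟨g.toWord, hg, FreeGroup.mk_toWord⟩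

theorem gen_eq_mk (a : Fin r × Bool) : gen a = FreeGroup.mk [a] := by
  obtain ⟨i, _ | _⟩ := a
  · exact (FreeGroup.inv_mk (L := [(i, true)])).trans rfl
  · rfl

theorem exists_norm_mul_inv_lt {g : FG r} (hg : g ≠ 1) :
    ∃ s ∈ Sset r, FreeGroup.norm (g * s⁻¹) < FreeGroup.norm g := by
  have hw : g.toWord ≠ [] := mt FreeGroup.toWord_eq_nil_iff.mp hg
  set w := g.toWord.dropLast
  set a := g.toWord.getLast hw
  have hg_eq : g = FreeGroup.mk w * gen a := by
    rw [gen_eq_mk, FreeGroup.mul_mk, List.dropLast_append_getLast, FreeGroup.mk_toWord]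
  refine ⟨gen a, ⟨a, rfl⟩, ?_⟩
  rw [hg_eq, mul_inv_cancel_right]
  calc FreeGroup.norm (FreeGroup.mk w) ≤ w.length := FreeGroup.norm_mk_le
    _ < g.toWord.length := by
      rw [List.length_dropLast]; exact Nat.sub_lt (List.length_pos_iff.mpr hw) one_pos
    _ = FreeGroup.norm (FreeGroup.mk w * gen a) := by rw [← hg_eq]; rfl

end Ball

section Splitting

variable {X : Type*} {r : ℕ} {T : FG r → X → X} {K L : Type*}

theorem pull_pull (hTmul : ∀ g h : FG r, T (g * h) = T g ∘ T h) (γ : X → K) (g h : FG r) :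
    pull T h (pull T g γ) = pull T (g * h) γ :=
  funext fun x => by simp only [pull, hTmul, Function.comp_apply]

theorem powS_eq_powS_iff (γ : X → K) (Q : Set (FG r)) (x y : X) :
    powS T γ Q x = powS T γ Q y ↔ ∀ g ∈ Q, γ (T g x) = γ (T g y) := by
  simp only [powS, funext_iff, Subtype.forall]

variable [MeasurableSpace X] {μ : Measure X}

theorem refines_pow_pull (γ : X → K) {k : ℕ} {g : FG r} (hg : g ∈ ball r k) :
    Refines μ (pow T γ k) (pull T g γ) :=
  .of_forall fun f => ⟨f ⟨g, hg⟩, fun _ hx => by rw [← hx]; rfl⟩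

theorem refines_pow_self (hT1 : T 1 = id) (γ : X → K) (k : ℕ) : Refines μ (pow T γ k) γ := by
  convert refines_pow_pull (μ := μ) (T := T) γ (g := 1) (by simp [ball])
  funext x
  simp [pull, hT1]

theorem refines_pow_zero (hT1 : T 1 = id) (γ : X → K) : Refines μ γ (pow T γ 0) :=
  .of_forall fun k => ⟨fun _ => k, fun x hx => funext fun ⟨g, hg⟩ => by
    obtain rfl : g = 1 := by simpa [ball] using hg
    simpa [pow, powS, hT1] using hx⟩

theorem IsSplitting.refl (p : X → ℕ) : IsSplitting μ T p p :=
  ⟨p, .refl, .refl p⟩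

theorem IsSplitting.congr {p : X → ℕ} {τ : X → K} {τ' : X → L} (h : IsSplitting μ T p τ)
    (hτ : PartEquiv μ τ τ') : IsSplitting μ T p τ' :=
  let ⟨σ, hσ, hστ⟩ := h
  ⟨σ, hσ, hστ.trans hτ⟩

theorem IsSplitting.pjoin_pull {p γ : X → ℕ} {τ : X → K} (h : IsSplitting μ T p τ)
    (hγ : Measurable γ) (hτγ : Refines μ τ γ) {s : FG r} (hs : s ∈ Sset r) :
    IsSplitting μ T p (pjoin τ (pull T s γ)) := by
  obtain ⟨σ, hσ, hστ⟩ := h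
  -- simple splittings are between `ℕ`-labelled partitions, so `σ ∨ T_s⁻¹γ` is relabelled
  have hrelabel : PartEquiv μ (Encodable.encode ∘ pjoin σ (pull T s γ)) (pjoin σ (pull T s γ)) :=
    partEquiv_of_forall_eq_iff fun x y => Encodable.encode_injective.eq_iff
  exact ⟨_, hσ.tail ⟨s, hs, γ, hγ, hστ.1.trans hτγ, hrelabel⟩,
    hrelabel.trans (hστ.pjoin_left _)⟩

theorem IsSplitting.pjoin_powS (hTmul : ∀ g h : FG r, T (g * h) = T g ∘ T h)
    (hT : ∀ g, Measurable (T g)) {p γ : X → ℕ} {ρ : X → K} [Nonempty K] (hγ : Measurable γ)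
    (h : IsSplitting μ T p ρ) (F : Finset (FG r))
    (hF : ∀ g ∈ F, ∃ s ∈ Sset r, Refines μ ρ (pull T (g * s⁻¹) γ)) :
    IsSplitting μ T p (pjoin ρ (powS T γ F)) := by
  induction F using Finset.induction_on with
  | empty =>
    refine h.congr (partEquiv_of_forall_eq_iff fun x y => ?_)
    simp only [pjoin, Prod.mk.injEq, powS_eq_powS_iff, Finset.coe_empty]
    simp
  | insert a F _ ih =>
    obtain ⟨s, hs, hρa⟩ := hF a (Finset.mem_insert_self a F)
    have h' := (ih fun g hg => hF g (Finset.mem_insert_of_mem hg)).pjoin_pull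
      (γ := pull T (a * s⁻¹) γ) (hγ.comp (hT _)) ((refines_pjoin_left _ _).trans hρa) hs
    rw [pull_pull hTmul, inv_mul_cancel_right] at h'
    refine h'.congr (partEquiv_of_forall_eq_iff fun x y => ?_)
    simp only [pjoin, pull, Prod.mk.injEq, powS_eq_powS_iff, Finset.coe_insert,
      Set.forall_mem_insert]
    tauto

theorem IsSplitting.pjoin_pow_succ (hTmul : ∀ g h : FG r, T (g * h) = T g ∘ T h)
    (hT : ∀ g, Measurable (T g)) {p γ : X → ℕ} {τ : X → K} [Nonempty K] (hγ : Measurable γ)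
    {k : ℕ} (h : IsSplitting μ T p (pjoin τ (pow T γ k))) :
    IsSplitting μ T p (pjoin τ (pow T γ (k + 1))) := by
  have hsphere := ((ball_finite r (k + 1)).sdiff (t := ball r k))
  refine (h.pjoin_powS hTmul hT hγ hsphere.toFinset fun g hg => ?_).congr
    (partEquiv_of_forall_eq_iff fun x y => ?_)
  · simp only [Set.Finite.mem_toFinset, Set.mem_sdiff, mem_ball, not_le] at hg
    obtain ⟨s, hs, hlt⟩ := exists_norm_mul_inv_lt (g := g) (by rintro rfl; simp at hg)
    exact ⟨s, hs, (refines_pjoin_right _ _).trans (refines_pow_pull γ (by rw [mem_ball]; omega))⟩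
  · simp only [pjoin, pow, Prod.mk.injEq, powS_eq_powS_iff, Set.Finite.coe_toFinset,
      Set.mem_sdiff, mem_ball]
    exact ⟨fun ⟨⟨hτ, hk⟩, hnew⟩ => ⟨hτ, fun g hg =>
        if hgk : FreeGroup.norm g ≤ k then hk g hgk else hnew g ⟨hg, hgk⟩⟩,
      fun ⟨hτ, hk⟩ => ⟨⟨hτ, fun g hg => hk g (hg.trans k.le_succ)⟩, fun g hg => hk g hg.1⟩⟩

theorem IsSplitting.pjoin_pow (hT1 : T 1 = id) (hTmul : ∀ g h : FG r, T (g * h) = T g ∘ T h)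
    (hT : ∀ g, Measurable (T g)) {p γ : X → ℕ} {τ : X → K} [Nonempty K] (hγ : Measurable γ)
    (h : IsSplitting μ T p τ) (hτγ : Refines μ τ γ) (k : ℕ) :
    IsSplitting μ T p (pjoin τ (pow T γ k)) := by
  induction k with
  | zero => exact h.congr (hτγ.trans (refines_pow_zero hT1 γ)).partEquiv_pjoin.symm
  | succ k ih => exact ih.pjoin_pow_succ hTmul hT hγ

end Splitting

theorem stmt_4_general {r : ℕ} {X : Type*} [MeasurableSpace X]
    (μ : Measure X)
    (T : FG r → X → X) (hT1 : T 1 = id)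
    (hTmul : ∀ g h : FG r, T (g * h) = T g ∘ T h)
    (hTmp : ∀ g : FG r, MeasurePreserving (T g) μ μ)
    (α β : X → ℕ) (hαm : Measurable α) (hβm : Measurable β)
    (n m : ℕ)
    (h1 : Refines μ (pow T β n) α) (h2 : Refines μ (pow T α m) (pow T β n)) :
    IsSplitting μ T β (pow T α m) := by
  have hT (g : FG r) : Measurable (T g) := (hTmp g).measurable
  have hβn : IsSplitting μ T β (pow T β n) :=
    ((IsSplitting.refl β).pjoin_pow hT1 hTmul hT hβm (.refl β) n).congr
      (refines_pow_self hT1 β n).partEquiv_pjoin'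
  exact (hβn.pjoin_pow hT1 hTmul hT hαm h1 m).congr h2.partEquiv_pjoin'

/-- if `β^n` refines `α` and `α^m` refines `β^n`, then `α^m`
is a splitting of `β`. -/
theorem stmt_4 {r : ℕ} (hr : 1 ≤ r) {X : Type*} [MeasurableSpace X] [StandardBorelSpace X]
    (μ : Measure X) [IsProbabilityMeasure μ]
    (T : FG r → X → X) (hT1 : T 1 = id)
    (hTmul : ∀ g h : FG r, T (g * h) = T g ∘ T h)
    (hTmp : ∀ g : FG r, MeasurePreserving (T g) μ μ)
    (α β : X → ℕ) (hαm : Measurable α) (hβm : Measurable β)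
    (hHα : Hpart μ α < ⊤) (hHβ : Hpart μ β < ⊤)
    (n m : ℕ)
    (h1 : Refines μ (pow T β n) α) (h2 : Refines μ (pow T α m) (pow T β n)) :
    IsSplitting μ T β (pow T α m) :=
  stmt_4_general μ T hT1 hTmul hTmp α β hαm hβm n m h1 h2

end

end Bowen
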